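/- Let c_m, c_s > 0 be reals, let f(r) = c_m·r/Q + c_s·(Q−r)/(Q·(r+1)), and assume c_s = f(0) < f(r) for every r ∈ {1,…,Q} (i.e., the minimum of f over {0,…,Q} is attained only at r = 0). Then every (K,N,Q,T)-scheme with singleton Reduce assignment satisfies the strict inequality c_m·p + c_s·L > c_s; in particular no scheme with finitely many servers attains the lower bound min_{r∈{0,…,Q}} f(r) with equality. -/

import Mathlib

/-- A (K,N,Q,T)-scheme: K servers, N input files, Q output functions,
T-bit intermediate values.  `M k` is the set of files mapped by server `k`,
`W k` the set of functions reduced by server `k`, `len k` the length (in bits)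
of server `k`'s message; `enc` produces the message of each server from its
locally computed intermediate values, and `dec` recovers, for each server `k`
and each `q ∈ W k`, the full row of intermediate values of function `q`
from all messages and the local values, correctly for every realization `v`. -/
structure Scheme (K N Q T : ℕ) where
  M : Fin K → Finset (Fin N)
  W : Fin K → Finset (Fin Q)
  cover : ∀ n : Fin N, ∃ k : Fin K, n ∈ M k
  len : Fin K → ℕ
  enc : (k : Fin K) → (Fin Q → {n : Fin N // n ∈ M k} → (Fin T → Bool)) →
    (Fin (len k) → Bool)
  dec : (k : Fin K) → (q : Fin Q) → q ∈ W k →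
    ((j : Fin K) → (Fin (len j) → Bool)) →
    (Fin Q → {n : Fin N // n ∈ M k} → (Fin T → Bool)) →
    (Fin N → Fin T → Bool)
  correct : ∀ (v : Fin Q × Fin N → Fin T → Bool) (k : Fin K) (q : Fin Q) (hq : q ∈ W k),
    dec k q hq (fun j => enc j (fun q' n => v (q', n.1))) (fun q' n => v (q', n.1)) =
      fun n => v (q, n)

/-- Peak computation load `p = (max_k |M k|)/N`. -/
noncomputable def peakLoad {K N Q T : ℕ} (S : Scheme K N Q T) : ℝ :=
  ((Finset.univ.sup (fun k : Fin K => (S.M k).card) : ℕ) : ℝ) / N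

/-- Communication load `L = (∑_k ℓ k)/(Q·N·T)`. -/
noncomputable def commLoad {K N Q T : ℕ} (S : Scheme K N Q T) : ℝ :=
  (∑ k : Fin K, (S.len k : ℝ)) / ((Q : ℝ) * N * T)

/-- Singleton Reduce assignment: the `W k` are pairwise disjoint, cover `Fin Q`,
and each server reduces at most one function. -/
def SingletonReduce {K N Q T : ℕ} (S : Scheme K N Q T) : Prop :=
  (∀ j k : Fin K, j ≠ k → Disjoint (S.W j) (S.W k)) ∧
  (∀ q : Fin Q, ∃ k : Fin K, q ∈ S.W k) ∧
  (∀ k : Fin K, (S.W k).card ≤ 1)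

/-! Choose a reducer `σ q` of every function `q` and decode the functions in the order
`0, 1, …, Q - 1`: the messages, together with the values `v (q, n)` for the files `n` mapped by
some `σ q'` with `q' ≤ q`, determine all of `v`. At most `(q + 1) m` files are mapped that way,
`m` the peak map size, so the messages carry at least `T ∑_q (N - (q + 1) m)` bits, i.e.
`L ≥ 1 - (Q + 1) p / 2`. The hypothesis `f 0 < f 1` says `c_m > c_s (Q + 1) / 2`, hence
`c_m p + c_s L ≥ c_s + (c_m - c_s (Q + 1) / 2) p > c_s`. -/

open Finset

theorem mul_sum_card_le_sum_of_injective {ι κ α : Type*} [Fintype ι] [DecidableEq ι]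
    [Fintype κ] [DecidableEq κ] [DecidableEq α] (s : ι → Finset α) (ℓ : κ → ℕ) (T : ℕ)
    (g : ((i : ι) → s i → Fin T → Bool) → (k : κ) → Fin (ℓ k) → Bool)
    (hg : Function.Injective g) :
    T * ∑ i, #(s i) ≤ ∑ k, ℓ k := by
  have hcard := Fintype.card_le_of_injective g hg
  simp only [Fintype.card_pi, Fintype.card_coe, Fintype.card_fin,
    Fintype.card_bool, prod_const, card_univ, ← pow_mul, prod_pow_eq_pow_sum] at hcard
  rw [mul_sum]
  exact (Nat.pow_le_pow_iff_right one_lt_two).mp hcard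

namespace Scheme

variable {K N Q T : ℕ} (S : Scheme K N Q T)

def messages (v : Fin Q × Fin N → Fin T → Bool) : (k : Fin K) → Fin (S.len k) → Bool :=
  fun k => S.enc k fun q n => v (q, n.1)

def maxMapCard : ℕ :=
  univ.sup fun k => #(S.M k)

theorem peakLoad_eq : peakLoad S = S.maxMapCard / N := rfl

theorem card_M_le_maxMapCard (k : Fin K) : #(S.M k) ≤ S.maxMapCard :=
  le_sup (f := fun k => #(S.M k)) (mem_univ k)

theorem peakLoad_pos (hN : 0 < N) : 0 < peakLoad S := by
  obtain ⟨k, hk⟩ := S.cover ⟨0, hN⟩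
  have : 0 < S.maxMapCard := (card_pos.mpr ⟨_, hk⟩).trans_le (S.card_M_le_maxMapCard k)
  rw [peakLoad_eq]
  positivity

def cutFiles (σ : Fin Q → Fin K) (q : Fin Q) : Finset (Fin N) :=
  (Iic q).biUnion fun q' => S.M (σ q')

theorem card_cutFiles_le (σ : Fin Q → Fin K) (q : Fin Q) :
    #(S.cutFiles σ q) ≤ (q + 1) * S.maxMapCard :=
  calc #(S.cutFiles σ q)
      ≤ ∑ q' ∈ Iic q, #(S.M (σ q')) := card_biUnion_le
    _ ≤ ∑ _q' ∈ Iic q, S.maxMapCard := sum_le_sum fun q' _ => S.card_M_le_maxMapCard (σ q')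
    _ = (q + 1) * S.maxMapCard := by rw [sum_const, Fin.card_Iic, smul_eq_mul]

/-- Once rows `< q` are known, the reducer of `q` knows all its local values, since rows `≥ q`
on its mapped files lie in the cut. -/
theorem eq_of_messages_eq {σ : Fin Q → Fin K} (hσ : ∀ q, q ∈ S.W (σ q))
    {v v' : Fin Q × Fin N → Fin T → Bool} (hmsg : S.messages v = S.messages v')
    (hcut : ∀ q, ∀ n ∈ S.cutFiles σ q, v (q, n) = v' (q, n)) : v = v' := by
  suffices hrow : ∀ q : Fin Q, (fun n => v (q, n)) = fun n => v' (q, n) from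
    funext fun x => congrFun (hrow x.1) x.2
  intro q
  induction q using WellFoundedLT.induction with
  | _ q ih =>
    have hlocal : (fun q'' (n : {n // n ∈ S.M (σ q)}) => v (q'', n.1)) =
        fun q'' n => v' (q'', n.1) := by
      funext q'' n
      rcases lt_or_ge q'' q with hlt | hge
      · exact congrFun (ih q'' hlt) n.1
      · exact hcut q'' n.1 (mem_biUnion.mpr ⟨q, mem_Iic.mpr hge, n.2⟩)
    rw [← S.correct v (σ q) q (hσ q), ← S.correct v' (σ q) q (hσ q)]
    exact congr_arg₂ _ hmsg hlocal

theorem mul_sum_card_compl_cutFiles_le {σ : Fin Q → Fin K} (hσ : ∀ q, q ∈ S.W (σ q)) :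
    T * ∑ q, #(S.cutFiles σ q)ᶜ ≤ ∑ k, S.len k := by
  let extend (w : (q : Fin Q) → ↥(S.cutFiles σ q)ᶜ → Fin T → Bool) :
      Fin Q × Fin N → Fin T → Bool :=
    fun x => if h : x.2 ∈ (S.cutFiles σ x.1)ᶜ then w x.1 ⟨x.2, h⟩ else fun _ => false
  refine mul_sum_card_le_sum_of_injective _ _ T (fun w => S.messages (extend w)) ?_
  intro w w' hmsg
  have hext := S.eq_of_messages_eq hσ hmsg fun q n hn => by
    simp [extend, hn]
  funext q n
  simpa [extend, mem_compl.mp n.2] using congrFun hext (q, n.1)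

theorem sum_range_add_one_mul_two (Q : ℕ) : (∑ i ∈ range Q, (i + 1)) * 2 = Q * (Q + 1) := by
  have := sum_range_succ' (fun i => i) Q
  rw [add_zero] at this
  rw [← this, sum_range_id_mul_two, Nat.add_sub_cancel, mul_comm]

theorem mul_two_le_sum_card_compl_cutFiles (σ : Fin Q → Fin K) :
    Q * N * 2 ≤ (∑ q, #(S.cutFiles σ q)ᶜ) * 2 + S.maxMapCard * (Q * (Q + 1)) := by
  have hrow : ∀ q, N ≤ #(S.cutFiles σ q)ᶜ + (q + 1) * S.maxMapCard := fun q => by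
    have := card_compl_add_card (S.cutFiles σ q)
    have := S.card_cutFiles_le σ q
    simp only [Fintype.card_fin] at *
    omega
  have hsum := sum_le_sum fun q (_ : q ∈ univ) => hrow q
  rw [sum_const, card_univ, Fintype.card_fin, smul_eq_mul, sum_add_distrib, ← sum_mul,
    Fin.sum_univ_eq_sum_range (· + 1)] at hsum
  rw [← sum_range_add_one_mul_two]
  nlinarith

theorem one_sub_le_commLoad (hW : ∀ q, ∃ k, q ∈ S.W k) (hQ : 0 < Q) (hN : 0 < N) (hT : 0 < T) :
    1 - ((Q : ℝ) + 1) / 2 * peakLoad S ≤ commLoad S := by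
  choose σ hσ using hW
  have hbits := S.mul_sum_card_compl_cutFiles_le hσ
  have hcount := S.mul_two_le_sum_card_compl_cutFiles σ
  have hnat : Q * N * T * 2 ≤ (∑ k, S.len k) * 2 + S.maxMapCard * (Q * (Q + 1)) * T := by
    nlinarith [Nat.mul_le_mul_right T hcount]
  have hreal : (Q * N * T * 2 : ℝ) ≤
      (∑ k, (S.len k : ℝ)) * 2 + S.maxMapCard * (Q * (Q + 1)) * T := by
    exact_mod_cast hnat
  rw [peakLoad_eq, commLoad, sub_le_iff_le_add]
  field_simp
  linarith

end Scheme

theorem no_finite_scheme_attains_general (Q : ℕ) (hQ : 0 < Q) (cm cs : ℝ)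
    (hcs : 0 < cs) (f : ℕ → ℝ)
    (hf : ∀ r : ℕ, f r = cm * (r : ℝ) / Q + cs * ((Q : ℝ) - r) / ((Q : ℝ) * (r + 1)))
    (hf0 : cs = f 0) (hlt : ∀ r : ℕ, 1 ≤ r → r ≤ Q → f 0 < f r)
    (K N T : ℕ) (hN : 0 < N) (hT : 0 < T)
    (S : Scheme K N Q T) (hS : SingletonReduce S) :
    cm * peakLoad S + cs * commLoad S > cs := by
  have hcm : cs * ((Q : ℝ) + 1) / 2 < cm := by
    have h1 := hlt 1 le_rfl hQ
    rw [← hf0, hf 1] at h1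
    push_cast at h1
    field_simp at h1
    linarith
  obtain ⟨-, hW, -⟩ := hS
  have hL := S.one_sub_le_commLoad hW hQ hN hT
  have hp := S.peakLoad_pos hN
  nlinarith [mul_le_mul_of_nonneg_left hL hcs.le, mul_lt_mul_of_pos_right hcm hp]

/-- if the minimum of `f` over `{0,…,Q}` is attained only at
`r = 0` (where `f 0 = c_s`), then no scheme with singleton Reduce assignment
and finitely many servers attains the bound: `c_m·p + c_s·L > c_s` strictly. -/
theorem no_finite_scheme_attains (Q : ℕ) (hQ : 0 < Q) (cm cs : ℝ) (hcm : 0 < cm)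
    (hcs : 0 < cs) (f : ℕ → ℝ)
    (hf : ∀ r : ℕ, f r = cm * (r : ℝ) / Q + cs * ((Q : ℝ) - r) / ((Q : ℝ) * (r + 1)))
    (hf0 : cs = f 0) (hlt : ∀ r : ℕ, 1 ≤ r → r ≤ Q → f 0 < f r)
    (K N T : ℕ) (hK : 0 < K) (hN : 0 < N) (hT : 0 < T)
    (S : Scheme K N Q T) (hS : SingletonReduce S) :
    cm * peakLoad S + cs * commLoad S > cs :=
  no_finite_scheme_attains_general Q hQ cm cs hcs f hf hf0 hlt K N T hN hT S hS
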